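/- For a positive definite matrix A and positive semidefinite B, the geometric mean M(A⁻¹, B) := √(A⁻¹)·√(√A·B·√A)·√(A⁻¹) has the same kernel and range as B. -/

import Mathlib

open scoped ComplexOrder

open Classical in
/-- The unique positive semidefinite square root of a positive semidefinite matrix
(junk value 0 otherwise). -/
noncomputable def psqrt {n : Type*} [Fintype n] [DecidableEq n] (X : Matrix n n ℂ) :
    Matrix n n ℂ :=
  if h : X.PosSemidef then
    (h.1.eigenvectorUnitary : Matrix n n ℂ) *
      Matrix.diagonal ((↑) ∘ (fun x : ℝ => Real.sqrt x) ∘ h.1.eigenvalues) *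
      (star h.1.eigenvectorUnitary : Matrix n n ℂ)
  else 0

/-- The range (support) of a matrix, i.e. the orthogonal complement of its kernel. -/
noncomputable def msupp {n : Type*} [Fintype n] [DecidableEq n] (X : Matrix n n ℂ) :
    Submodule ℂ (EuclideanSpace ℂ n) :=
  (LinearMap.ker (Matrix.toEuclideanLin X))ᗮ

/-- The kernel of a matrix, as a subspace of Euclidean space. -/
noncomputable def mker {n : Type*} [Fintype n] [DecidableEq n] (X : Matrix n n ℂ) :
    Submodule ℂ (EuclideanSpace ℂ n) :=
  LinearMap.ker (Matrix.toEuclideanLin X)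

/-- The generalized geometric mean M(A,B) = √A · √(√(A⁺) B √(A⁺)) · √A, where Ap
stands for the Moore–Penrose pseudoinverse A⁺ of A. -/
noncomputable def geoMean {n : Type*} [Fintype n] [DecidableEq n]
    (A Ap B : Matrix n n ℂ) : Matrix n n ℂ :=
  psqrt A * psqrt (psqrt Ap * B * psqrt Ap) * psqrt A

/-!
Write `S = √A`, which is invertible, so that `√(A⁻¹) = S⁻¹` and the mean is
`S⁻¹ √(S B S) S⁻¹`. Invertible factors on the left do not change kernels, and a positive
semidefinite matrix has the same kernel as its square root since `ker (Xᴴ X) = ker X`. Hence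
`ker M = ker (√(S B S) S⁻¹) = ker (S B S S⁻¹) = ker (S B) = ker B`, and the ranges agree as
the orthogonal complements of the kernels.
-/

open Matrix
open scoped MatrixOrder

section
variable {n : Type*} [Fintype n] [DecidableEq n]

lemma psqrt_eq_sqrt {X : Matrix n n ℂ} (hX : 0 ≤ X) : psqrt X = CFC.sqrt X := by
  have hX' : X.PosSemidef := hX.posSemidef
  rw [psqrt, dif_pos hX', CFC.sqrt_eq_cfc, cfc_nnreal_eq_real _ X, hX'.1.cfc_eq]
  simp only [IsHermitian.cfc, Unitary.conjStarAlgAut_apply]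
  congr 3
  funext i
  simp [hX'.eigenvalues_nonneg i]

lemma sqrt_nonsing_inv {𝕜 : Type*} [RCLike 𝕜] {X : Matrix n n 𝕜} (hX : 0 ≤ X) :
    CFC.sqrt X⁻¹ = (CFC.sqrt X)⁻¹ :=
  CFC.sqrt_unique (a := X⁻¹) (by rw [← Matrix.mul_inv_rev, CFC.sqrt_mul_sqrt_self X])
    (CFC.sqrt_nonneg X).posSemidef.inv.nonneg

lemma mem_mker {X : Matrix n n ℂ} {x : EuclideanSpace ℂ n} : x ∈ mker X ↔ X *ᵥ x.ofLp = 0 := by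
  simp [mker, toLpLin_apply]

lemma mker_mul (X Y : Matrix n n ℂ) : mker (X * Y) = (mker X).comap (toEuclideanLin Y) := by
  ext x
  simp [mem_mker, ← mulVec_mulVec]

lemma mker_isUnit_mul {P : Matrix n n ℂ} (hP : IsUnit P) (X : Matrix n n ℂ) :
    mker (P * X) = mker X := by
  ext x
  simp only [mem_mker, ← mulVec_mulVec, (mulVec_injective_iff_isUnit.2 hP).eq_iff' (mulVec_zero P)]

lemma mker_conjTranspose_mul_self (X : Matrix n n ℂ) : mker (Xᴴ * X) = mker X := by
  ext x
  simp only [mem_mker, conjTranspose_mul_self_mulVec_eq_zero]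

lemma mker_sqrt {X : Matrix n n ℂ} (hX : 0 ≤ X) : mker (CFC.sqrt X) = mker X := by
  have hsq : (CFC.sqrt X)ᴴ * CFC.sqrt X = X := by
    rw [(CFC.sqrt_nonneg X).posSemidef.isHermitian.eq, CFC.sqrt_mul_sqrt_self X hX]
  rw [← mker_conjTranspose_mul_self, hsq]

end

/-- For positive definite A and positive semidefinite B, the geometric mean
M(A⁻¹,B) = √(A⁻¹) √(√A B √A) √(A⁻¹) has the same kernel and range as B. -/
theorem geoMean_inv_ker_range
    {n : Type*} [Fintype n] [DecidableEq n]
    (A B : Matrix n n ℂ) (hA : A.PosDef) (hB : B.PosSemidef) :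
    mker (psqrt A⁻¹ * psqrt (psqrt A * B * psqrt A) * psqrt A⁻¹) = mker B ∧
    msupp (psqrt A⁻¹ * psqrt (psqrt A * B * psqrt A) * psqrt A⁻¹) = msupp B := by
  have hA₀ : 0 ≤ A := hA.posSemidef.nonneg
  set S := CFC.sqrt A
  have hS : IsUnit S := (CFC.isUnit_sqrt_iff A hA₀).2 hA.isUnit
  have hSBS : 0 ≤ S * B * S := conjugate_nonneg_of_nonneg hB.nonneg (CFC.sqrt_nonneg A)
  have hker : mker (psqrt A⁻¹ * psqrt (psqrt A * B * psqrt A) * psqrt A⁻¹) = mker B := by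
    rw [psqrt_eq_sqrt hA.inv.posSemidef.nonneg, sqrt_nonsing_inv hA₀, psqrt_eq_sqrt hA₀,
      psqrt_eq_sqrt hSBS]
    calc mker (S⁻¹ * CFC.sqrt (S * B * S) * S⁻¹)
        = (mker (CFC.sqrt (S * B * S))).comap (toEuclideanLin S⁻¹) := by
          rw [mul_assoc, mker_isUnit_mul (isUnit_nonsing_inv_iff.2 hS), mker_mul]
      _ = mker (S * B * S * S⁻¹) := by rw [mker_sqrt hSBS, mker_mul (S * B * S)]
      _ = mker B := by
          rw [mul_assoc, mul_nonsing_inv _ ((isUnit_iff_isUnit_det S).1 hS), mul_one,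
            mker_isUnit_mul hS]
  exact ⟨hker, congrArg Submodule.orthogonal hker⟩
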